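/- The function G(x) = e^{-√2 x} - e^{-√2 x}(1+e^{2√2 x})^{-3/2} + 2√2 x e^{√2 x}(1+e^{2√2 x})^{-3/2} + k₁ e^{√2 x}(1+e^{2√2 x})^{-3/2} satisfies, for every real constant k₁, the linear ODE -G''(x) + U''(H_{0,1}(x)) G(x) = [-24 H_{0,1}(x)² + 30 H_{0,1}(x)⁴] e^{-√2 x} + 8√2 H'_{0,1}(x). -/

import Mathlib

open Real

noncomputable def U (φ : ℝ) : ℝ := φ ^ 2 * (1 - φ ^ 2) ^ 2

noncomputable def H (x : ℝ) : ℝ :=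
  Real.exp (Real.sqrt 2 * x) / Real.sqrt (1 + Real.exp (2 * Real.sqrt 2 * x))

noncomputable def G (k₁ x : ℝ) : ℝ :=
  Real.exp (-(Real.sqrt 2) * x) -
    Real.exp (-(Real.sqrt 2) * x) * (1 + Real.exp (2 * Real.sqrt 2 * x)) ^ (-(3 : ℝ) / 2) +
    2 * Real.sqrt 2 * x * Real.exp (Real.sqrt 2 * x) *
      (1 + Real.exp (2 * Real.sqrt 2 * x)) ^ (-(3 : ℝ) / 2) +
    k₁ * Real.exp (Real.sqrt 2 * x) * (1 + Real.exp (2 * Real.sqrt 2 * x)) ^ (-(3 : ℝ) / 2)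

/-!
`H` solves the first-order equation `H' = √2 H (1 - H²)`. Hence `ψ = H (1 - H²) = H' / √2`
has `ψ' = √2 (H - 4H³ + 3H⁵)` and `ψ'' = U''(H) ψ`: it spans the kernel of
`L = -d²/dx² + U''(H)`. The `rpow` terms of `G` are multiples of `ψ`, so `G = e^{-√2x} + c ψ`
with `c = 2√2x + k₁ - e^{-2√2x}`, and `L G = (U''(H) - 2) e^{-√2x} - c'' ψ - 2 c' ψ'`.
The identity `H² (1 + e^{-2√2x}) = 1` turns the last two terms into `16 ψ = 8√2 H'`.
-/

theorem deriv_deriv_add_mul {𝕜 : Type*} [NontriviallyNormedField 𝕜]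
    {f c ψ f' c' ψ' f'' c'' ψ'' : 𝕜 → 𝕜}
    (hf : ∀ x, HasDerivAt f (f' x) x) (hf' : ∀ x, HasDerivAt f' (f'' x) x)
    (hc : ∀ x, HasDerivAt c (c' x) x) (hc' : ∀ x, HasDerivAt c' (c'' x) x)
    (hψ : ∀ x, HasDerivAt ψ (ψ' x) x) (hψ' : ∀ x, HasDerivAt ψ' (ψ'' x) x) (x : 𝕜) :
    deriv (deriv fun x => f x + c x * ψ x) x =
      f'' x + c'' x * ψ x + 2 * c' x * ψ' x + c x * ψ'' x := by
  have hderiv :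
      deriv (fun x => f x + c x * ψ x) = fun x => f' x + (c' x * ψ x + c x * ψ' x) :=
    funext fun x => ((hf x).add ((hc x).mul (hψ x))).deriv
  rw [hderiv]
  exact ((hf' x).add (((hc' x).mul (hψ x)).add ((hc x).mul (hψ' x)))).deriv.trans (by ring)

theorem hasDerivAt_exp_const_mul (a x : ℝ) :
    HasDerivAt (fun x => exp (a * x)) (a * exp (a * x)) x := by
  simpa [mul_comm] using ((hasDerivAt_id x).const_mul a).exp

theorem deriv_deriv_U (φ : ℝ) : deriv (deriv U) φ = 2 - 24 * φ ^ 2 + 30 * φ ^ 4 := by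
  have hU : deriv U = fun φ => 2 * φ - 8 * φ ^ 3 + 6 * φ ^ 5 := by
    funext φ
    refine ((hasDerivAt_pow 2 φ).mul (((hasDerivAt_pow 2 φ).const_sub 1).pow 2)).deriv.trans ?_
    simp only [Pi.pow_apply]
    push_cast
    ring
  rw [hU]
  refine (((hasDerivAt_id φ).const_mul 2).sub ((hasDerivAt_pow 3 φ).const_mul 8)).add
    ((hasDerivAt_pow 5 φ).const_mul 6) |>.deriv.trans ?_
  push_cast
  ring

theorem one_sub_H_sq (x : ℝ) : 1 - H x ^ 2 = (1 + exp (2 * √2 * x))⁻¹ := by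
  have hexp : exp (2 * √2 * x) = exp (√2 * x) ^ 2 := by rw [← exp_nat_mul]; ring_nf
  rw [H, div_pow, sq_sqrt (by positivity), hexp]
  field_simp
  ring

theorem H_sq_mul_one_add_exp (x : ℝ) : H x ^ 2 * (1 + exp (-2 * √2 * x)) = 1 := by
  have hexp : exp (-2 * √2 * x) = (exp (2 * √2 * x))⁻¹ := by rw [← exp_neg]; ring_nf
  rw [H, div_pow, sq_sqrt (by positivity), hexp, ← exp_nat_mul]
  field_simp
  ring_nf

theorem hasDerivAt_H (x : ℝ) : HasDerivAt H (√2 * (H x * (1 - H x ^ 2))) x := by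
  have hA : 0 < 1 + exp (2 * √2 * x) := by positivity
  have hsqrt := ((hasDerivAt_exp_const_mul (2 * √2) x).const_add 1).sqrt hA.ne'
  refine ((hasDerivAt_exp_const_mul √2 x).div hsqrt (sqrt_pos.2 hA).ne').congr_deriv ?_
  rw [one_sub_H_sq, H]
  field_simp
  rw [sq_sqrt (by positivity)]
  ring

noncomputable def zeroMode (x : ℝ) : ℝ := H x * (1 - H x ^ 2)

theorem hasDerivAt_zeroMode (x : ℝ) :
    HasDerivAt zeroMode (√2 * (H x - 4 * H x ^ 3 + 3 * H x ^ 5)) x := by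
  refine ((hasDerivAt_H x).mul (((hasDerivAt_H x).fun_pow 2).const_sub 1)).congr_deriv ?_
  push_cast
  ring

theorem hasDerivAt_deriv_zeroMode (x : ℝ) :
    HasDerivAt (fun x => √2 * (H x - 4 * H x ^ 3 + 3 * H x ^ 5))
      ((2 - 24 * H x ^ 2 + 30 * H x ^ 4) * zeroMode x) x := by
  have hH := hasDerivAt_H x
  refine (((hH.fun_sub ((hH.fun_pow 3).const_mul 4)).fun_add
    ((hH.fun_pow 5).const_mul 3)).const_mul √2).congr_deriv ?_
  have hs : √2 ^ 2 = 2 := sq_sqrt zero_le_two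
  rw [zeroMode]
  push_cast
  linear_combination (1 - 12 * H x ^ 2 + 15 * H x ^ 4) * (H x * (1 - H x ^ 2)) * hs

theorem exp_mul_rpow_eq_zeroMode (x : ℝ) :
    exp (√2 * x) * (1 + exp (2 * √2 * x)) ^ (-(3 : ℝ) / 2) = zeroMode x := by
  have hA : 0 < 1 + exp (2 * √2 * x) := by positivity
  have hrpow : (1 + exp (2 * √2 * x)) ^ (-(3 : ℝ) / 2) =
      (√(1 + exp (2 * √2 * x)))⁻¹ * (1 + exp (2 * √2 * x))⁻¹ := by
    rw [show -(3 : ℝ) / 2 = -(1 / 2) + -1 by norm_num, rpow_add hA, rpow_neg hA.le,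
      rpow_neg_one, ← sqrt_eq_rpow]
  rw [hrpow, zeroMode, one_sub_H_sq, H]
  ring

theorem G_eq (k₁ : ℝ) :
    G k₁ = fun x =>
      exp (-√2 * x) + (2 * √2 * x + k₁ - exp (-2 * √2 * x)) * zeroMode x := by
  funext x
  have hexp : exp (-√2 * x) = exp (-2 * √2 * x) * exp (√2 * x) := by rw [← exp_add]; ring_nf
  rw [G, ← exp_mul_rpow_eq_zeroMode, hexp]
  ring

theorem G_solves_linear_ODE (k₁ : ℝ) :
    ∀ x : ℝ, -(deriv (deriv (G k₁)) x) + deriv (deriv U) (H x) * G k₁ x =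
      (-24 * H x ^ 2 + 30 * H x ^ 4) * Real.exp (-(Real.sqrt 2) * x) +
        8 * Real.sqrt 2 * deriv H x := by
  intro x
  have hs : √2 ^ 2 = 2 := sq_sqrt zero_le_two
  have hf' (x : ℝ) : HasDerivAt (fun x => -√2 * exp (-√2 * x)) (2 * exp (-√2 * x)) x := by
    refine ((hasDerivAt_exp_const_mul _ x).const_mul _).congr_deriv ?_
    linear_combination exp (-√2 * x) * hs
  have hc (x : ℝ) : HasDerivAt (fun x => 2 * √2 * x + k₁ - exp (-2 * √2 * x))
      (2 * √2 * (1 + exp (-2 * √2 * x))) x := by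
    refine ((((hasDerivAt_id x).const_mul _).add_const k₁).sub
      (hasDerivAt_exp_const_mul _ x)).congr_deriv ?_
    simp only [mul_one]
    ring
  have hc' (x : ℝ) : HasDerivAt (fun x => 2 * √2 * (1 + exp (-2 * √2 * x)))
      (-8 * exp (-2 * √2 * x)) x := by
    refine (((hasDerivAt_exp_const_mul _ x).const_add 1).const_mul _).congr_deriv ?_
    linear_combination -4 * exp (-2 * √2 * x) * hs
  rw [G_eq, deriv_deriv_add_mul (hasDerivAt_exp_const_mul _) hf' hc hc' hasDerivAt_zeroMode
    hasDerivAt_deriv_zeroMode, deriv_deriv_U, (hasDerivAt_H x).deriv]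
  unfold zeroMode
  linear_combination 24 * H x * (1 - H x ^ 2) * H_sq_mul_one_add_exp x -
    (4 * (1 + exp (-2 * √2 * x)) * (H x - 4 * H x ^ 3 + 3 * H x ^ 5) +
      8 * H x * (1 - H x ^ 2)) * hs
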